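/- Let φ = (φ₁,…,φ_n) : V_n → V_n be a bijection and ψ : V_n → F_2. Then the Maiorana–McFarland function f(x₁,…,x_{2n}) = φ₁(x₁,…,x_n)x_{n+1} + … + φ_n(x₁,…,x_n)x_{2n} + ψ(x₁,…,x_n) = ⟨φ(x_{(1)}), x_{(2)}⟩ + ψ(x_{(1)}) is a bent function of 2n variables. -/
import Mathlib


open Finset

def ip {n : ℕ} (a b : Fin n → ZMod 2) : ZMod 2 := ∑ i, a i * b i

def wht {n : ℕ} (f : (Fin n → ZMod 2) → ZMod 2) (l : Fin n → ZMod 2) : ℤ :=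
  ∑ x : Fin n → ZMod 2, (-1 : ℤ) ^ (f x + ip l x).val


def whtP {m k : ℕ} (f : (Fin m → ZMod 2) × (Fin k → ZMod 2) → ZMod 2)
    (l : (Fin m → ZMod 2) × (Fin k → ZMod 2)) : ℤ :=
  ∑ x : (Fin m → ZMod 2) × (Fin k → ZMod 2),
    (-1 : ℤ) ^ (f x + ip l.1 x.1 + ip l.2 x.2).val

lemma chi_add (u v : ZMod 2) : (-1:ℤ)^((u+v).val) = (-1)^u.val * (-1)^v.val := by
  revert u v; decide

lemma chi_sum {ι : Type*} (s : Finset ι) (g : ι → ZMod 2) :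
    (-1:ℤ)^((∑ i ∈ s, g i).val) = ∏ i ∈ s, (-1:ℤ)^((g i).val) := by
  classical
  induction s using Finset.cons_induction with
  | empty => simp
  | cons a s ha ih => rw [Finset.sum_cons, chi_add, ih, Finset.prod_cons]

lemma ip_add_left {n : ℕ} (a b x : Fin n → ZMod 2) :
    ip a x + ip b x = ip (a + b) x := by
  simp [ip, add_mul, Finset.sum_add_distrib]

lemma char_sum (n : ℕ) (a : Fin n → ZMod 2) :
    ∑ x : Fin n → ZMod 2, (-1:ℤ)^((ip a x).val) = if a = 0 then 2^n else 0 := by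
  classical
  unfold ip
  simp_rw [chi_sum]
  rw [← Fintype.piFinset_univ, ← Finset.prod_univ_sum (fun _ => (Finset.univ : Finset (ZMod 2))) (fun i b => (-1:ℤ)^((a i * b).val))]
  have hfac : ∀ c : ZMod 2, (∑ b : ZMod 2, (-1:ℤ)^((c*b).val)) = if c = 0 then 2 else 0 := by
    decide
  simp_rw [hfac]
  by_cases h : a = 0
  · simp [h]
  · obtain ⟨i, hi⟩ : ∃ i, a i ≠ 0 := by
      by_contra hc
      push_neg at hc
      exact h (funext hc)
    rw [if_neg h]
    exact Finset.prod_eq_zero (Finset.mem_univ i) (by simp [hi])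

theorem maiorana_mcfarland_bent (n : ℕ)
    (φ : (Fin n → ZMod 2) → (Fin n → ZMod 2)) (hφ : Function.Bijective φ)
    (ψ : (Fin n → ZMod 2) → ZMod 2) :
    ∀ l : (Fin n → ZMod 2) × (Fin n → ZMod 2),
      |whtP (fun p => ip (φ p.1) p.2 + ψ p.1) l| = 2 ^ n := by
  intro l
  classical
  obtain ⟨u, hu⟩ := hφ.2 l.2
  unfold whtP
  rw [Fintype.sum_prod_type]
  have key : ∀ x1 : Fin n → ZMod 2,
      (∑ x2 : Fin n → ZMod 2,
        (-1:ℤ) ^ ((ip (φ x1) x2 + ψ x1 + ip l.1 x1 + ip l.2 x2).val))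
      = (-1:ℤ)^((ψ x1 + ip l.1 x1).val) * (if φ x1 + l.2 = 0 then (2:ℤ)^n else 0) := by
    intro x1
    have harg : ∀ x2, ip (φ x1) x2 + ψ x1 + ip l.1 x1 + ip l.2 x2
        = (ψ x1 + ip l.1 x1) + ip (φ x1 + l.2) x2 := by
      intro x2; rw [← ip_add_left]; ring
    simp_rw [harg, chi_add]
    rw [← Finset.mul_sum, char_sum]
  simp_rw [key]
  have hcond : ∀ x1, (φ x1 + l.2 = 0) ↔ x1 = u := by
    intro x1
    constructor
    · intro h
      apply hφ.1
      rw [hu]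
      have h2 : φ x1 = -l.2 := eq_neg_of_add_eq_zero_left h
      rw [h2]
      funext i
      exact CharTwo.neg_eq _
    · intro h
      subst h
      rw [hu]
      funext i
      exact CharTwo.add_self_eq_zero _
  simp_rw [hcond, mul_ite, mul_zero]
  rw [Finset.sum_ite_eq' Finset.univ u]
  simp only [Finset.mem_univ, if_true]
  rw [abs_mul, abs_pow, abs_neg, abs_one, one_pow, one_mul]
  simp
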